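/- arXiv:2105.14127 — 3 statements merged into one kernel-verified Lean document; each statement's English description precedes it below -/
import Mathlib

section
/- Task similarity bound for optimal entropic values: Let M_i and M_j be finite-horizon MDPs with horizon T sharing the same transition kernel but with reward functions r_i, r_j satisfying sup_{s,a,s'} |r_i(s,a,s') − r_j(s,a,s')| ≤ δ. Let 𝒬^{ii}_h and 𝒬^{jj}_h denote the optimal entropic utility Q-functions of M_i and M_j respectively, defined by 𝒬_h(s,a) = U_β[r(s,a,s') + max_{a'} 𝒬_{h+1}(s',a')] with 𝒬_{T+1} = 0. Then sup_{s,a} |𝒬^{ii}_h(s,a) − 𝒬^{jj}_h(s,a)| ≤ (T − h + 1)δ for all h ≤ T + 1. -/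
open Finset

/-- The entropic utility of `f(s')` where `s' ∼ p`, for a finite distribution `p`. -/
noncomputable def Ubel {S : Type*} [Fintype S] (β : ℝ) (p : S → ℝ) (f : S → ℝ) : ℝ :=
  (1 / β) * Real.log (∑ s', p s' * Real.exp (β * f s'))

lemma ubel_sum_pos {S : Type*} [Fintype S] (β : ℝ) (p : S → ℝ)
    (hp0 : ∀ s, 0 ≤ p s) (hp1 : ∑ s, p s = 1) (f : S → ℝ) :
    0 < ∑ s', p s' * Real.exp (β * f s') := by
  obtain ⟨s0, hs0⟩ : ∃ s0, p s0 ≠ 0 := by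
    by_contra h
    push_neg at h
    simp [h] at hp1
  refine Finset.sum_pos' (fun s _ => mul_nonneg (hp0 s) (Real.exp_pos _).le)
    ⟨s0, Finset.mem_univ _, mul_pos (lt_of_le_of_ne (hp0 s0) (Ne.symm hs0)) (Real.exp_pos _)⟩

lemma ubel_mono {S : Type*} [Fintype S] (β : ℝ) (hβ : β ≠ 0) (p : S → ℝ)
    (hp0 : ∀ s, 0 ≤ p s) (hp1 : ∑ s, p s = 1) (f g : S → ℝ) (hfg : ∀ s, f s ≤ g s) :
    Ubel β p f ≤ Ubel β p g := by
  unfold Ubel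
  rcases lt_or_gt_of_ne hβ with hneg | hpos
  · have hsum : ∑ s', p s' * Real.exp (β * g s') ≤ ∑ s', p s' * Real.exp (β * f s') :=
      Finset.sum_le_sum fun s _ => mul_le_mul_of_nonneg_left
        (Real.exp_le_exp.2 (mul_le_mul_of_nonpos_left (hfg s) hneg.le)) (hp0 s)
    have hlog := Real.log_le_log (ubel_sum_pos β p hp0 hp1 g) hsum
    exact mul_le_mul_of_nonpos_left hlog (by simp [div_nonpos_iff, hneg.le])
  · have hsum : ∑ s', p s' * Real.exp (β * f s') ≤ ∑ s', p s' * Real.exp (β * g s') :=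
      Finset.sum_le_sum fun s _ => mul_le_mul_of_nonneg_left
        (Real.exp_le_exp.2 (mul_le_mul_of_nonneg_left (hfg s) hpos.le)) (hp0 s)
    have hlog := Real.log_le_log (ubel_sum_pos β p hp0 hp1 f) hsum
    exact mul_le_mul_of_nonneg_left hlog (by positivity)

lemma ubel_cash {S : Type*} [Fintype S] (β : ℝ) (hβ : β ≠ 0) (p : S → ℝ)
    (hp0 : ∀ s, 0 ≤ p s) (hp1 : ∑ s, p s = 1) (f : S → ℝ) (c : ℝ) :
    Ubel β p (fun s => f s + c) = Ubel β p f + c := by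
  unfold Ubel
  have h1 : ∀ s, p s * Real.exp (β * (f s + c)) =
      (p s * Real.exp (β * f s)) * Real.exp (β * c) := by
    intro s
    rw [mul_add, Real.exp_add]
    ring
  simp_rw [h1, ← Finset.sum_mul]
  rw [Real.log_mul (ubel_sum_pos β p hp0 hp1 f).ne' (Real.exp_pos _).ne', Real.log_exp]
  field_simp

lemma ubel_abs_le {S : Type*} [Fintype S] (β : ℝ) (hβ : β ≠ 0) (p : S → ℝ)
    (hp0 : ∀ s, 0 ≤ p s) (hp1 : ∑ s, p s = 1) (f g : S → ℝ) (C : ℝ)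
    (hfg : ∀ s, |f s - g s| ≤ C) :
    |Ubel β p f - Ubel β p g| ≤ C := by
  rw [abs_sub_le_iff]
  constructor
  · have : Ubel β p f ≤ Ubel β p (fun s => g s + C) :=
      ubel_mono β hβ p hp0 hp1 _ _ fun s => by
        have := (abs_sub_le_iff.1 (hfg s)).1; linarith
    rw [ubel_cash β hβ p hp0 hp1 g C] at this
    linarith
  · have : Ubel β p g ≤ Ubel β p (fun s => f s + C) :=
      ubel_mono β hβ p hp0 hp1 _ _ fun s => by
        have := (abs_sub_le_iff.1 (hfg s)).2; linarith
    rw [ubel_cash β hβ p hp0 hp1 f C] at this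
    linarith

lemma sup'_abs_sub_le {A : Type*} [Fintype A] [Nonempty A] (f g : A → ℝ) (C : ℝ)
    (hfg : ∀ a, |f a - g a| ≤ C) :
    |Finset.univ.sup' Finset.univ_nonempty f - Finset.univ.sup' Finset.univ_nonempty g| ≤ C := by
  rw [abs_sub_le_iff]
  constructor
  · rw [sub_le_iff_le_add]
    refine Finset.sup'_le _ _ fun a _ => ?_
    have h1 := (abs_sub_le_iff.1 (hfg a)).1
    have h2 : g a ≤ Finset.univ.sup' Finset.univ_nonempty g := Finset.le_sup' _ (Finset.mem_univ a)
    linarith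
  · rw [sub_le_iff_le_add]
    refine Finset.sup'_le _ _ fun a _ => ?_
    have h1 := (abs_sub_le_iff.1 (hfg a)).2
    have h2 : f a ≤ Finset.univ.sup' Finset.univ_nonempty f := Finset.le_sup' _ (Finset.mem_univ a)
    linarith

/-- **Task similarity bound for optimal entropic values.**  Let `Qi`, `Qj` be the optimal
entropic utility Q-functions of two finite-horizon MDPs sharing the same transition
kernel `P` and horizon `T`, with rewards `ri`, `rj` satisfying
`|ri s a s' - rj s a s'| ≤ δ` for all `s, a, s'`.  Then
`|Qi h s a - Qj h s a| ≤ (T - h + 1) δ` for all `h ≤ T + 1`. -/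
theorem entropic_optimal_task_similarity {S A : Type*} [Fintype S] [Fintype A] [Nonempty A]
    (T : ℕ) (β : ℝ) (hβ : β ≠ 0)
    (P : S → A → S → ℝ) (hP0 : ∀ s a s', 0 ≤ P s a s') (hP1 : ∀ s a, ∑ s', P s a s' = 1)
    (ri rj : S → A → S → ℝ) (δ : ℝ)
    (hr : ∀ s a s', |ri s a s' - rj s a s'| ≤ δ)
    (Qi Qj : ℕ → S → A → ℝ)
    (hQi : ∀ h, h ≤ T → ∀ s a, Qi h s a =
      Ubel β (P s a) (fun s' => ri s a s' +
        Finset.univ.sup' Finset.univ_nonempty (fun a' => Qi (h + 1) s' a')))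
    (hQiT : ∀ s a, Qi (T + 1) s a = 0)
    (hQj : ∀ h, h ≤ T → ∀ s a, Qj h s a =
      Ubel β (P s a) (fun s' => rj s a s' +
        Finset.univ.sup' Finset.univ_nonempty (fun a' => Qj (h + 1) s' a')))
    (hQjT : ∀ s a, Qj (T + 1) s a = 0) :
    ∀ h, h ≤ T + 1 → ∀ s a, |Qi h s a - Qj h s a| ≤ ((T : ℝ) - h + 1) * δ := by
  suffices H : ∀ k h, h + k = T + 1 → ∀ s a,
      |Qi h s a - Qj h s a| ≤ ((T : ℝ) - h + 1) * δ by
    intro h hh s a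
    exact H (T + 1 - h) h (by omega) s a
  intro k
  induction k with
  | zero =>
    intro h hh s a
    have : h = T + 1 := by omega
    subst this
    have : ((T : ℝ) - (T + 1 : ℕ) + 1) * δ = 0 := by push_cast; ring
    rw [hQiT, hQjT, this]
    simp
  | succ k ih =>
    intro h hh s a
    have hhT : h ≤ T := by omega
    rw [hQi h hhT s a, hQj h hhT s a]
    have key : ∀ s', |(ri s a s' +
        Finset.univ.sup' Finset.univ_nonempty (fun a' => Qi (h + 1) s' a')) -
        (rj s a s' +
        Finset.univ.sup' Finset.univ_nonempty (fun a' => Qj (h + 1) s' a'))| ≤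
        δ + ((T : ℝ) - (h + 1) + 1) * δ := by
      intro s'
      have h1 := hr s a s'
      have h2 : |Finset.univ.sup' Finset.univ_nonempty (fun a' => Qi (h + 1) s' a') -
          Finset.univ.sup' Finset.univ_nonempty (fun a' => Qj (h + 1) s' a')| ≤
          ((T : ℝ) - (h + 1) + 1) * δ := by
        refine sup'_abs_sub_le _ _ _ fun a' => ?_
        have := ih (h + 1) (by omega) s' a'
        push_cast at this
        exact this
      have heq : (ri s a s' +
          Finset.univ.sup' Finset.univ_nonempty (fun a' => Qi (h + 1) s' a')) -
          (rj s a s' +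
          Finset.univ.sup' Finset.univ_nonempty (fun a' => Qj (h + 1) s' a')) =
          (ri s a s' - rj s a s') +
          (Finset.univ.sup' Finset.univ_nonempty (fun a' => Qi (h + 1) s' a') -
           Finset.univ.sup' Finset.univ_nonempty (fun a' => Qj (h + 1) s' a')) := by ring
      rw [heq]
      exact (abs_add_le _ _).trans (add_le_add h1 h2)
    have := ubel_abs_le β hβ (P s a) (hP0 s a) (hP1 s a) _ _ _ key
    refine this.trans (le_of_eq ?_)
    ring
end

section
/- Discounted GPI for entropic utility: if |𝒥̃^{π_i}_β(s,a,z) − 𝒥^{π_i}_β(s,a,z)| ≤ εz for all s, a, z ∈ [0,1], i, and π(s,z) ∈ argmax_a max_i 𝒥̃^{π_i}_β(s,a,z), then 𝒥^π_β(s,a,z) ≥ max_i 𝒥^{π_i}_β(s,a,z) − 2εz/(1−γ). -/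
/-!
The error `J i - Jπ`, measured in units of `z`, satisfies a contracting recursion: one Bellman
step of `Jπ` loses at most `2 ε γ z` against `J i` (greedy choice with respect to `ε`-accurate
estimates), and the entropic utility is monotone and cash invariant, so any valid bound `k`
improves to `γ (k + 2ε)`. Starting from the a priori bound `2C`, the error is therefore at most
the fixed point `2εγ / (1 - γ)` of this affine map.
-/

open Finset

section Ubel

variable {S : Type*} [Fintype S] {β : ℝ} {p : S → ℝ}

theorem sum_mul_exp_pos (hp0 : ∀ s, 0 ≤ p s) (hp1 : ∑ s, p s = 1) (f : S → ℝ) :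
    0 < ∑ s, p s * Real.exp (β * f s) := by
  obtain ⟨s₀, -, hs₀⟩ := exists_ne_zero_of_sum_ne_zero (hp1 ▸ one_ne_zero : ∑ s, p s ≠ 0)
  exact sum_pos' (fun s _ => mul_nonneg (hp0 s) (Real.exp_pos _).le)
    ⟨s₀, mem_univ _, mul_pos ((hp0 s₀).lt_of_ne' hs₀) (Real.exp_pos _)⟩

theorem Ubel_mono (hβ : β ≠ 0) (hp0 : ∀ s, 0 ≤ p s) (hp1 : ∑ s, p s = 1) {f g : S → ℝ}
    (hfg : ∀ s, f s ≤ g s) : Ubel β p f ≤ Ubel β p g := by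
  unfold Ubel
  rcases hβ.lt_or_gt with hneg | hpos
  · refine mul_le_mul_of_nonpos_left (Real.log_le_log (sum_mul_exp_pos hp0 hp1 g) ?_)
      (one_div_nonpos.2 hneg.le)
    exact sum_le_sum fun s _ => mul_le_mul_of_nonneg_left
      (Real.exp_le_exp.2 (mul_le_mul_of_nonpos_left (hfg s) hneg.le)) (hp0 s)
  · refine mul_le_mul_of_nonneg_left (Real.log_le_log (sum_mul_exp_pos hp0 hp1 f) ?_)
      (one_div_nonneg.2 hpos.le)
    exact sum_le_sum fun s _ => mul_le_mul_of_nonneg_left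
      (Real.exp_le_exp.2 (mul_le_mul_of_nonneg_left (hfg s) hpos.le)) (hp0 s)

theorem Ubel_add_const (hβ : β ≠ 0) (hp0 : ∀ s, 0 ≤ p s) (hp1 : ∑ s, p s = 1) (f : S → ℝ)
    (c : ℝ) : Ubel β p (fun s => f s + c) = Ubel β p f + c := by
  have hsum : ∑ s, p s * Real.exp (β * (f s + c))
      = Real.exp (β * c) * ∑ s, p s * Real.exp (β * f s) := by
    rw [mul_sum]
    exact sum_congr rfl fun s _ => by rw [mul_add, Real.exp_add]; ring
  unfold Ubel
  rw [hsum, Real.log_mul (Real.exp_ne_zero _) (sum_mul_exp_pos hp0 hp1 f).ne', Real.log_exp]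
  field_simp
  ring

theorem Ubel_le_add_of_le_add (hβ : β ≠ 0) (hp0 : ∀ s, 0 ≤ p s) (hp1 : ∑ s, p s = 1)
    {f g : S → ℝ} {c : ℝ} (hfg : ∀ s, f s ≤ g s + c) : Ubel β p f ≤ Ubel β p g + c :=
  Ubel_add_const hβ hp0 hp1 g c ▸ Ubel_mono hβ hp0 hp1 hfg

end Ubel

theorem IsClosed.fixedPoint_mem_of_affine_mapsTo {B : Set ℝ} (hB : IsClosed B) {γ b k₀ : ℝ}
    (hγ : |γ| < 1) (h₀ : k₀ ∈ B) (hstep : ∀ k ∈ B, γ * (k + b) ∈ B) :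
    γ * b / (1 - γ) ∈ B := by
  set L := γ * b / (1 - γ)
  have h1γ : 1 - γ ≠ 0 := by linarith [(abs_lt.1 hγ).2]
  have hmem : ∀ m : ℕ, γ ^ m * (k₀ - L) + L ∈ B := by
    intro m
    induction m with
    | zero => simpa using h₀
    | succ m ih =>
      convert hstep _ ih using 1
      simp only [L]
      field_simp
      ring
  have htend : Filter.Tendsto (fun m : ℕ => γ ^ m * (k₀ - L) + L) Filter.atTop (nhds L) := by
    simpa using ((tendsto_pow_atTop_nhds_zero_of_abs_lt_one hγ).mul_const (k₀ - L)).add_const L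
  exact hB.mem_of_tendsto htend (Filter.Eventually.of_forall hmem)

/-- **Discounted GPI for the entropic utility.**  On the augmented discounted MDP (where
`z ∈ [0,1]` tracks accumulated discounting and transitions send `z ↦ γ z`), let
`J i` be the entropic utility functions of stationary policies `π i` (the unique
fixed points of the entropic Bellman operator, hence bounded by a multiple of `z`).
If `|J̃ i s a z - J i s a z| ≤ ε z` and `πg` is the GPI policy, choosing at `(s,z)`
an action maximizing `max_i J̃ i s · z`, then the utility `Jπ` of `πg` satisfies
`Jπ s a z ≥ max_i J i s a z - 2 ε z / (1 - γ)`. -/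
theorem entropic_GPI_discounted {S A : Type*} [Fintype S] [Fintype A] (n : ℕ)
    (β : ℝ) (hβ : β ≠ 0) (γ : ℝ) (hγ : γ ∈ Set.Ioo (0 : ℝ) 1)
    (P : S → A → S → ℝ) (hP0 : ∀ s a s', 0 ≤ P s a s') (hP1 : ∀ s a, ∑ s', P s a s' = 1)
    (r : S → A → S → ℝ)
    (π : Fin n → S → ℝ → A)
    (J : Fin n → S → A → ℝ → ℝ)
    (hJ : ∀ i s a z, z ∈ Set.Icc (0 : ℝ) 1 →
      J i s a z = Ubel β (P s a)
        (fun s' => z * r s a s' + J i s' (π i s' (γ * z)) (γ * z)))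
    (C : ℝ) (hJb : ∀ i s a z, z ∈ Set.Icc (0 : ℝ) 1 → |J i s a z| ≤ C * z)
    (Jt : Fin n → S → A → ℝ → ℝ) (ε : ℝ)
    (hApprox : ∀ i s a z, z ∈ Set.Icc (0 : ℝ) 1 → |Jt i s a z - J i s a z| ≤ ε * z)
    (πg : S → ℝ → A)
    (hGPI : ∀ s z a i, z ∈ Set.Icc (0 : ℝ) 1 → ∃ j, Jt i s a z ≤ Jt j s (πg s z) z)
    (Jπ : S → A → ℝ → ℝ)
    (hJπ : ∀ s a z, z ∈ Set.Icc (0 : ℝ) 1 →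
      Jπ s a z = Ubel β (P s a)
        (fun s' => z * r s a s' + Jπ s' (πg s' (γ * z)) (γ * z)))
    (hJπb : ∀ s a z, z ∈ Set.Icc (0 : ℝ) 1 → |Jπ s a z| ≤ C * z) :
    ∀ s a z, z ∈ Set.Icc (0 : ℝ) 1 → ∀ i,
      Jπ s a z ≥ J i s a z - 2 * ε * z / (1 - γ) := by
  obtain ⟨hγ0, hγ1⟩ := hγ
  have hγz : ∀ z ∈ Set.Icc (0 : ℝ) 1, γ * z ∈ Set.Icc (0 : ℝ) 1 := fun z hz =>
    ⟨mul_nonneg hγ0.le hz.1, by nlinarith [hz.1, hz.2]⟩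
  have hgreedy : ∀ i s a z, z ∈ Set.Icc (0 : ℝ) 1 →
      ∃ j, J i s a z ≤ J j s (πg s z) z + 2 * ε * z := fun i s a z hz => by
    obtain ⟨j, hj⟩ := hGPI s z a i hz
    refine ⟨j, ?_⟩
    linarith [(abs_le.1 (hApprox i s a z hz)).1, (abs_le.1 (hApprox j s (πg s z) z hz)).2]
  set B := {k : ℝ | ∀ s a z, z ∈ Set.Icc (0 : ℝ) 1 → ∀ i, J i s a z - Jπ s a z ≤ k * z}
  have hB : IsClosed B := by
    simp only [B, Set.ofPred_forall]
    repeat refine isClosed_iInter fun _ => ?_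
    exact isClosed_le continuous_const (continuous_id.mul continuous_const)
  have h₀ : 2 * C ∈ B := fun s a z hz i => by
    linarith [(abs_le.1 (hJb i s a z hz)).2, (abs_le.1 (hJπb s a z hz)).1]
  have hstep : ∀ k ∈ B, γ * (k + 2 * ε) ∈ B := fun k hk s a z hz i => by
    suffices J i s a z ≤ Jπ s a z + (k + 2 * ε) * (γ * z) by linarith
    rw [hJ i s a z hz, hJπ s a z hz]
    refine Ubel_le_add_of_le_add hβ (hP0 s a) (hP1 s a) fun s' => ?_
    obtain ⟨j, hj⟩ := hgreedy i s' (π i s' (γ * z)) (γ * z) (hγz z hz)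
    linarith [hk s' (πg s' (γ * z)) (γ * z) (hγz z hz) j]
  have hfix := hB.fixedPoint_mem_of_affine_mapsTo (abs_lt.2 ⟨by linarith, hγ1⟩) h₀ hstep
  intro s a z hz i
  have hε : 0 ≤ ε := by
    linarith [hApprox i s a 1 ⟨zero_le_one, le_rfl⟩, abs_nonneg (Jt i s a 1 - J i s a 1)]
  have hγε : γ * (2 * ε) / (1 - γ) * z ≤ 2 * ε * z / (1 - γ) := by
    rw [div_mul_eq_mul_div]
    gcongr ?_ / _
    nlinarith [mul_nonneg hε hz.1]
  linarith [hfix s a z hz i]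
end

section
/- Approximate covariance Bellman bound: if ‖ψ̃^π_h(s,a) − ψ^π_h(s,a)‖² ≤ ε_h(s,a) and ‖E_{s'}[δ̃_h (ψ̃^π_{h+1}(s',π_{h+1}(s')) − ψ^π_{h+1}(s',π_{h+1}(s')))ᵀ]‖ ≤ ε_h(s,a), then ‖Σ^π_h(s,a) − E_{s'}[δ̃_h δ̃_hᵀ + Σ̃^π_{h+1}(s', π_{h+1}(s'))]‖ ≤ 3 ε_h(s,a), where δ̃_h is the Bellman residual computed with the approximate successor features ψ̃ and Σ̃^π_{h+1} = Cov[Ψ^π_{h+1} − ψ̃^π_{h+1} centered at ψ̃]. -/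
open Finset

noncomputable section

/-- Probability of observing the state sequence `τ` over the next `m` transitions,
starting at time `h` in `(s, a)` and following the deterministic Markov policy `π`. -/
def pathProb {S A : Type*} (P : S → A → S → ℝ) (π : ℕ → S → A) :
    (m : ℕ) → (h : ℕ) → S → A → (Fin m → S) → ℝ
  | 0, _, _, _, _ => 1
  | m + 1, h, s, a, τ =>
      P s a (τ 0) * pathProb P π m (h + 1) (τ 0) (π (h + 1) (τ 0)) (fun i => τ i.succ)

/-- The cumulative feature vector along the state sequence `τ`. -/
def featSum {S A : Type*} {d : ℕ} (φ : S → A → S → Fin d → ℝ) (π : ℕ → S → A) :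
    (m : ℕ) → (h : ℕ) → S → A → (Fin m → S) → (Fin d → ℝ)
  | 0, _, _, _, _ => 0
  | m + 1, h, s, a, τ =>
      φ s a (τ 0) + featSum φ π m (h + 1) (τ 0) (π (h + 1) (τ 0)) (fun i => τ i.succ)

/-- The successor features `ψ^π_h(s,a) = E[Ψ^π_h(s,a)]`. -/
def sf {S A : Type*} [Fintype S] {d : ℕ} (P : S → A → S → ℝ)
    (φ : S → A → S → Fin d → ℝ) (π : ℕ → S → A) (m h : ℕ) (s : S) (a : A) :
    Fin d → ℝ :=
  ∑ τ : Fin m → S, pathProb P π m h s a τ • featSum φ π m h s a τ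

/-- The second-moment matrix of the feature return `Ψ^π_h(s,a)` centered at `c`;
`c = ψ^π_h(s,a)` gives the true covariance `Σ^π_h(s,a)`, while centering at an
approximation `ψ̃` gives `Σ̃^π_h(s,a)`. -/
def sfCov {S A : Type*} [Fintype S] {d : ℕ} (P : S → A → S → ℝ)
    (φ : S → A → S → Fin d → ℝ) (π : ℕ → S → A) (m h : ℕ) (s : S) (a : A)
    (c : Fin d → ℝ) : Fin d → Fin d → ℝ :=
  fun i j => ∑ τ : Fin m → S, pathProb P π m h s a τ *
    ((featSum φ π m h s a τ i - c i) * (featSum φ π m h s a τ j - c j))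

/-!
The true covariance satisfies the exact Bellman equation `Σ_h = E[δ δᵀ + Σ_{h+1}]` with the true
residual `δ = φ + ψ_{h+1} - ψ_h`, and centering a second moment at `c` instead of at the mean adds
`(ψ - c)(ψ - c)ᵀ` (parallel-axis identity), so `Σ̃_{h+1} = Σ_{h+1} + e eᵀ` with
`e = ψ̃_{h+1} - ψ_{h+1}`. Since `δ = δ̃ - e + u` with `u = ψ̃_h - ψ_h` and `E[δ] = 0`, the difference
in the theorem is exactly `-(C + Cᵀ + u uᵀ)`, where `C = E[δ̃ eᵀ]` is the cross term of the
hypothesis; each of the three terms has norm at most `ε`.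
-/

section WeightedSums

variable {ι : Type*} [Fintype ι] (w : ι → ℝ)

theorem sum_mul_sub_mul_sub_eq (hw : ∑ k, w k = 1) (f g : ι → ℝ) (a b : ℝ) :
    ∑ k, w k * ((f k - a) * (g k - b))
      = ∑ k, w k * ((f k - ∑ l, w l * f l) * (g k - ∑ l, w l * g l))
        + (∑ l, w l * f l - a) * (∑ l, w l * g l - b) := by
  set μf := ∑ l, w l * f l
  set μg := ∑ l, w l * g l
  have expand : ∀ k, w k * ((f k - a) * (g k - b))
      = w k * ((f k - μf) * (g k - μg)) + (μg - b) * (w k * f k) + (μf - a) * (w k * g k)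
        - (μf * (μg - b) + μg * (μf - a)) * w k + (μf - a) * (μg - b) * w k := by
    intro k; ring
  simp only [expand, sum_add_distrib, sum_sub_distrib, ← mul_sum, hw]
  ring

/-- Entry `(i, j)` of the residual decomposition, with `x` the exact Bellman targets of mean `μ`,
`y` the approximate targets and `ψ` the approximate mean, so that `y - ψ` is the approximate
residual and `y - x` the error of the next-step features. -/
theorem sum_mul_residual_decomp (hw : ∑ k, w k = 1) (x x' y y' : ι → ℝ) (ψ ψ' : ℝ) :
    ∑ k, w k * ((x k - ∑ l, w l * x l) * (x' k - ∑ l, w l * x' l)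
        - (y k - x k) * (y' k - x' k) - (y k - ψ) * (y' k - ψ'))
      = -(∑ k, w k * ((y k - ψ) * (y' k - x' k)) + ∑ k, w k * ((y' k - ψ') * (y k - x k))
        + (ψ - ∑ l, w l * x l) * (ψ' - ∑ l, w l * x' l)) := by
  set μ := ∑ l, w l * x l
  set μ' := ∑ l, w l * x' l
  have expand : ∀ k, w k * ((x k - μ) * (x' k - μ') - (y k - x k) * (y' k - x' k)
        - (y k - ψ) * (y' k - ψ'))
      = -(w k * ((y k - ψ) * (y' k - x' k))) - w k * ((y' k - ψ') * (y k - x k))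
        + (ψ' - μ') * (w k * x k) + (ψ - μ) * (w k * x' k)
        - (μ * (ψ' - μ') + μ' * (ψ - μ) + (ψ - μ) * (ψ' - μ')) * w k := by
    intro k; ring
  simp only [expand, sum_add_distrib, sum_sub_distrib, sum_neg_distrib, ← mul_sum, hw]
  ring

end WeightedSums

theorem Fintype.sum_pi_fin_succ {S M : Type*} [Fintype S] [AddCommMonoid M] {m : ℕ}
    (f : (Fin (m + 1) → S) → M) :
    ∑ τ, f τ = ∑ s', ∑ τ : Fin m → S, f (Fin.cons s' τ) := by
  rw [← (Fin.consEquiv fun _ => S).sum_comp f, Fintype.sum_prod_type]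
  rfl

section SuccessorFeatures

variable {S A : Type*} [Fintype S] {d : ℕ} (P : S → A → S → ℝ)
  (φ : S → A → S → Fin d → ℝ) (π : ℕ → S → A)

omit [Fintype S] in
@[simp]
theorem pathProb_cons {m h : ℕ} (s : S) (a : A) (s' : S) (τ : Fin m → S) :
    pathProb P π (m + 1) h s a (Fin.cons s' τ)
      = P s a s' * pathProb P π m (h + 1) s' (π (h + 1) s') τ := by
  simp [pathProb]

omit [Fintype S] in
@[simp]
theorem featSum_cons {m h : ℕ} (s : S) (a : A) (s' : S) (τ : Fin m → S) :
    featSum φ π (m + 1) h s a (Fin.cons s' τ)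
      = φ s a s' + featSum φ π m (h + 1) s' (π (h + 1) s') τ := by
  simp [featSum]

theorem sum_pathProb (hP1 : ∀ s a, ∑ s', P s a s' = 1) (m h : ℕ) (s : S) (a : A) :
    ∑ τ, pathProb P π m h s a τ = 1 := by
  induction m generalizing h s a with
  | zero => simp [pathProb]
  | succ m ih => simp [Fintype.sum_pi_fin_succ, ← mul_sum, ih, hP1]

theorem sf_apply (m h : ℕ) (s : S) (a : A) (i : Fin d) :
    sf P φ π m h s a i = ∑ τ, pathProb P π m h s a τ * featSum φ π m h s a τ i := by
  simp [sf, Finset.sum_apply]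

theorem sf_succ (hP1 : ∀ s a, ∑ s', P s a s' = 1) (m h : ℕ) (s : S) (a : A) (i : Fin d) :
    sf P φ π (m + 1) h s a i
      = ∑ s', P s a s' * (φ s a s' i + sf P φ π m (h + 1) s' (π (h + 1) s') i) := by
  simp [sf_apply, Fintype.sum_pi_fin_succ, mul_add, mul_assoc, sum_add_distrib, ← mul_sum,
    ← sum_mul, sum_pathProb P π hP1]

theorem sfCov_succ (m h : ℕ) (s : S) (a : A) (c : Fin d → ℝ) (i j : Fin d) :
    sfCov P φ π (m + 1) h s a c i j
      = ∑ s', P s a s' * sfCov P φ π m (h + 1) s' (π (h + 1) s') (c - φ s a s') i j := by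
  simp only [sfCov, Fintype.sum_pi_fin_succ, pathProb_cons, featSum_cons, mul_sum]
  refine sum_congr rfl fun s' _ => sum_congr rfl fun τ _ => ?_
  simp only [Pi.add_apply, Pi.sub_apply]
  ring

theorem sfCov_eq_sfCov_sf_add (hP1 : ∀ s a, ∑ s', P s a s' = 1) (m h : ℕ) (s : S) (a : A)
    (c : Fin d → ℝ) (i j : Fin d) :
    sfCov P φ π m h s a c i j
      = sfCov P φ π m h s a (sf P φ π m h s a) i j
        + (sf P φ π m h s a i - c i) * (sf P φ π m h s a j - c j) := by
  simp only [sfCov, sf_apply]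
  exact sum_mul_sub_mul_sub_eq _ (sum_pathProb P π hP1 m h s a) _ _ _ _

theorem sfCov_succ_sub_approx (hP1 : ∀ s a, ∑ s', P s a s' = 1) (m h : ℕ) (s : S) (a : A)
    (c : Fin d → ℝ) (c' : S → Fin d → ℝ) (i j : Fin d) :
    sfCov P φ π (m + 1) h s a (sf P φ π (m + 1) h s a) i j
        - ∑ s', P s a s' * ((φ s a s' i + c' s' i - c i) * (φ s a s' j + c' s' j - c j)
          + sfCov P φ π m (h + 1) s' (π (h + 1) s') (c' s') i j)
      = -(∑ s', P s a s' *
            ((φ s a s' i + c' s' i - c i) * (c' s' j - sf P φ π m (h + 1) s' (π (h + 1) s') j))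
          + ∑ s', P s a s' *
            ((φ s a s' j + c' s' j - c j) * (c' s' i - sf P φ π m (h + 1) s' (π (h + 1) s') i))
          + (c i - sf P φ π (m + 1) h s a i) * (c j - sf P φ π (m + 1) h s a j)) := by
  set ψ' := fun s' => sf P φ π m (h + 1) s' (π (h + 1) s')
  set μ := sf P φ π (m + 1) h s a
  have hμ : ∀ k, μ k = ∑ s', P s a s' * (φ s a s' k + ψ' s' k) := sf_succ P φ π hP1 m h s a
  calc _ = ∑ s', P s a s' * ((φ s a s' i + ψ' s' i - μ i) * (φ s a s' j + ψ' s' j - μ j)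
          - (c' s' i - ψ' s' i) * (c' s' j - ψ' s' j)
          - (φ s a s' i + c' s' i - c i) * (φ s a s' j + c' s' j - c j)) := by
        rw [sfCov_succ, ← sum_sub_distrib]
        refine sum_congr rfl fun s' _ => ?_
        rw [sfCov_eq_sfCov_sf_add P φ π hP1 m (h + 1) _ _ (_ - _),
          sfCov_eq_sfCov_sf_add P φ π hP1 m (h + 1) _ _ (c' s')]
        simp only [Pi.sub_apply, ψ']
        ring
    _ = _ := by
        simp only [hμ]
        convert sum_mul_residual_decomp (P s a) (hP1 s a) (fun s' => φ s a s' i + ψ' s' i)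
          (fun s' => φ s a s' j + ψ' s' j) (fun s' => φ s a s' i + c' s' i)
          (fun s' => φ s a s' j + c' s' j) (c i) (c j) using 6 <;> ring

end SuccessorFeatures

theorem approximate_covariance_bellman_general {S A : Type*} [Fintype S] {d : ℕ} (T : ℕ)
    (P : S → A → S → ℝ) (hP1 : ∀ s a, ∑ s', P s a s' = 1)
    (φ : S → A → S → Fin d → ℝ) (π : ℕ → S → A)
    -- a matrix-compatible norm:
    (N : (Fin d → Fin d → ℝ) → ℝ)
    (hN_add : ∀ M M', N (M + M') ≤ N M + N M')
    (hN_smul : ∀ (c : ℝ) M, N (c • M) = |c| * N M)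
    (hN_outer : ∀ v : Fin d → ℝ, N (fun i j => v i * v j) ≤ ∑ i, v i ^ 2)
    (hN_transpose : ∀ M : Fin d → Fin d → ℝ, N (fun i j => M j i) = N M)
    -- approximate successor features:
    (ψt : ℕ → S → A → Fin d → ℝ)
    (h : ℕ) (hh : h ≤ T) (s : S) (a : A) (ε : ℝ)
    -- `‖ψ̃_h(s,a) − ψ_h(s,a)‖² ≤ ε`:
    (hmean : ∑ i, (ψt h s a i - sf P φ π (T + 1 - h) h s a i) ^ 2 ≤ ε)
    -- `‖E_{s'}[δ̃_h (ψ̃_{h+1}(s',π(s')) − ψ_{h+1}(s',π(s')))ᵀ]‖ ≤ ε`: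
    (hcross : N (fun i j => ∑ s', P s a s' *
        ((φ s a s' i + ψt (h + 1) s' (π (h + 1) s') i - ψt h s a i) *
         (ψt (h + 1) s' (π (h + 1) s') j - sf P φ π (T - h) (h + 1) s' (π (h + 1) s') j)))
      ≤ ε) :
    N (fun i j =>
        sfCov P φ π (T + 1 - h) h s a (sf P φ π (T + 1 - h) h s a) i j
          - ∑ s', P s a s' *
              ((φ s a s' i + ψt (h + 1) s' (π (h + 1) s') i - ψt h s a i) *
               (φ s a s' j + ψt (h + 1) s' (π (h + 1) s') j - ψt h s a j)
               + sfCov P φ π (T - h) (h + 1) s' (π (h + 1) s')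
                   (ψt (h + 1) s' (π (h + 1) s')) i j))
      ≤ 3 * ε := by
  rw [show T + 1 - h = T - h + 1 by omega] at hmean ⊢
  set C : Fin d → Fin d → ℝ := fun i j => ∑ s', P s a s' *
    ((φ s a s' i + ψt (h + 1) s' (π (h + 1) s') i - ψt h s a i) *
      (ψt (h + 1) s' (π (h + 1) s') j - sf P φ π (T - h) (h + 1) s' (π (h + 1) s') j))
  set u : Fin d → ℝ := fun i => ψt h s a i - sf P φ π (T - h + 1) h s a i
  calc N _ = N (-(C + (fun i j => C j i) + fun i j => u i * u j)) := by
        congr 1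
        funext i j
        exact sfCov_succ_sub_approx P φ π hP1 (T - h) h s a (ψt h s a)
          (fun s' => ψt (h + 1) s' (π (h + 1) s')) i j
    _ = N (C + (fun i j => C j i) + fun i j => u i * u j) := by
        rw [← neg_one_smul ℝ, hN_smul, abs_neg, abs_one, one_mul]
    _ ≤ N C + N (fun i j => C j i) + N (fun i j => u i * u j) :=
        (hN_add _ _).trans (add_le_add_left (hN_add _ _) _)
    _ ≤ ε + ε + ε := by
        gcongr
        · rwa [hN_transpose]
        · exact (hN_outer u).trans hmean
    _ = 3 * ε := by ring

/-- **Approximate covariance Bellman bound.**  Let `N` be a matrix-compatible norm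
(subadditive, absolutely homogeneous, transpose-invariant, with `N(v vᵀ) ≤ ‖v‖²` in
the Euclidean norm).  If the approximate successor features `ψ̃` satisfy
`‖ψ̃^π_h(s,a) − ψ^π_h(s,a)‖² ≤ ε` and
`N(E_{s'}[δ̃_h (ψ̃^π_{h+1}(s',π_{h+1}(s')) − ψ^π_{h+1}(s',π_{h+1}(s')))ᵀ]) ≤ ε`, where
`δ̃_h = φ + ψ̃^π_{h+1}(s',π_{h+1}(s')) − ψ̃^π_h(s,a)`, then
`N(Σ^π_h(s,a) − E_{s'}[δ̃_h δ̃_hᵀ + Σ̃^π_{h+1}(s', π_{h+1}(s'))]) ≤ 3 ε`,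
with `Σ̃^π_{h+1}` the covariance of `Ψ^π_{h+1}` centered at `ψ̃^π_{h+1}`. -/
theorem approximate_covariance_bellman {S A : Type*} [Fintype S] {d : ℕ} (T : ℕ)
    (P : S → A → S → ℝ) (hP0 : ∀ s a s', 0 ≤ P s a s') (hP1 : ∀ s a, ∑ s', P s a s' = 1)
    (φ : S → A → S → Fin d → ℝ) (π : ℕ → S → A)
    -- a matrix-compatible norm:
    (N : (Fin d → Fin d → ℝ) → ℝ)
    (hN_add : ∀ M M', N (M + M') ≤ N M + N M')
    (hN_smul : ∀ (c : ℝ) M, N (c • M) = |c| * N M)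
    (hN_outer : ∀ v : Fin d → ℝ, N (fun i j => v i * v j) ≤ ∑ i, v i ^ 2)
    (hN_transpose : ∀ M : Fin d → Fin d → ℝ, N (fun i j => M j i) = N M)
    -- approximate successor features:
    (ψt : ℕ → S → A → Fin d → ℝ)
    (h : ℕ) (hh : h ≤ T) (s : S) (a : A) (ε : ℝ)
    -- `‖ψ̃_h(s,a) − ψ_h(s,a)‖² ≤ ε`:
    (hmean : ∑ i, (ψt h s a i - sf P φ π (T + 1 - h) h s a i) ^ 2 ≤ ε)
    -- `‖E_{s'}[δ̃_h (ψ̃_{h+1}(s',π(s')) − ψ_{h+1}(s',π(s')))ᵀ]‖ ≤ ε`: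
    (hcross : N (fun i j => ∑ s', P s a s' *
        ((φ s a s' i + ψt (h + 1) s' (π (h + 1) s') i - ψt h s a i) *
         (ψt (h + 1) s' (π (h + 1) s') j - sf P φ π (T - h) (h + 1) s' (π (h + 1) s') j)))
      ≤ ε) :
    N (fun i j =>
        sfCov P φ π (T + 1 - h) h s a (sf P φ π (T + 1 - h) h s a) i j
          - ∑ s', P s a s' *
              ((φ s a s' i + ψt (h + 1) s' (π (h + 1) s') i - ψt h s a i) *
               (φ s a s' j + ψt (h + 1) s' (π (h + 1) s') j - ψt h s a j)
               + sfCov P φ π (T - h) (h + 1) s' (π (h + 1) s')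
                   (ψt (h + 1) s' (π (h + 1) s')) i j))
      ≤ 3 * ε :=
  approximate_covariance_bellman_general T P hP1 φ π N hN_add hN_smul hN_outer hN_transpose ψt h hh
    s a ε hmean hcross

end
end
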